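/- Let 0 ≤ m < 1 and let u, v be real numbers with −m ≤ u ≤ v ≤ m. Then artanh(v) − artanh(u) ≤ artanh(m) + artanh(v − u − m), where artanh denotes the inverse hyperbolic tangent (note v − u − m ∈ (−m, m] under the stated hypotheses). -/
import Mathlib

/-- The inverse hyperbolic tangent, `artanh x = (1/2) · log ((1+x)/(1-x))`
(not yet in this version of Mathlib). -/
noncomputable def artanh (x : ℝ) : ℝ := Real.log ((1 + x) / (1 - x)) / 2

/-- For `0 ≤ m < 1` and `-m ≤ u ≤ v ≤ m`,
`artanh v - artanh u ≤ artanh m + artanh (v - u - m)`. -/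
theorem artanh_sub_le_artanh_add_artanh (m u v : ℝ)
    (hm0 : 0 ≤ m) (hm1 : m < 1) (hu : -m ≤ u) (huv : u ≤ v) (hv : v ≤ m) :
    artanh v - artanh u ≤ artanh m + artanh (v - u - m) := by
  have h1v : (0:ℝ) < 1 - v := by linarith
  have h1u : (0:ℝ) < 1 + u := by linarith
  have h2v : (0:ℝ) < 1 + v := by linarith
  have h2u : (0:ℝ) < 1 - u := by linarith
  have hm2 : (0:ℝ) < 1 - m := by linarith
  have hm3 : (0:ℝ) < 1 + m := by linarith
  have hw1 : (0:ℝ) < 1 + (v - u - m) := by linarith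
  have hw2 : (0:ℝ) < 1 - (v - u - m) := by linarith
  have key : ((1 + v) * (1 - u)) / ((1 - v) * (1 + u))
      ≤ ((1 + m) * (1 + (v - u - m))) / ((1 - m) * (1 - (v - u - m))) := by
    rw [div_le_div_iff₀ (by positivity) (by positivity)]
    nlinarith [mul_nonneg (mul_nonneg (by linarith : (0:ℝ) ≤ m + u)
      (by linarith : (0:ℝ) ≤ m - v)) (by linarith : (0:ℝ) ≤ v - u)]
  have key' : Real.log (((1 + v) * (1 - u)) / ((1 - v) * (1 + u)))
      ≤ Real.log (((1 + m) * (1 + (v - u - m))) / ((1 - m) * (1 - (v - u - m)))) :=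
    Real.log_le_log (by positivity) key
  have lA : Real.log (((1 + v) * (1 - u)) / ((1 - v) * (1 + u)))
      = Real.log (1 + v) + Real.log (1 - u) - (Real.log (1 - v) + Real.log (1 + u)) := by
    rw [Real.log_div (by positivity) (by positivity), Real.log_mul h2v.ne' h2u.ne',
      Real.log_mul h1v.ne' h1u.ne']
  have lB : Real.log (((1 + m) * (1 + (v - u - m))) / ((1 - m) * (1 - (v - u - m))))
      = Real.log (1 + m) + Real.log (1 + (v - u - m))
        - (Real.log (1 - m) + Real.log (1 - (v - u - m))) := by
    rw [Real.log_div (by positivity) (by positivity), Real.log_mul hm3.ne' hw1.ne',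
      Real.log_mul hm2.ne' hw2.ne']
  have lv : Real.log ((1 + v) / (1 - v)) = Real.log (1 + v) - Real.log (1 - v) :=
    Real.log_div h2v.ne' h1v.ne'
  have lu : Real.log ((1 + u) / (1 - u)) = Real.log (1 + u) - Real.log (1 - u) :=
    Real.log_div h1u.ne' h2u.ne'
  have lm : Real.log ((1 + m) / (1 - m)) = Real.log (1 + m) - Real.log (1 - m) :=
    Real.log_div hm3.ne' hm2.ne'
  have lw : Real.log ((1 + (v - u - m)) / (1 - (v - u - m)))
      = Real.log (1 + (v - u - m)) - Real.log (1 - (v - u - m)) :=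
    Real.log_div hw1.ne' hw2.ne'
  unfold artanh
  rw [lv, lu, lm, lw]
  rw [lA, lB] at key'
  linarith
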